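/- Fix m ≥ 1 and work inside B_{2m} = G(2,2m). Let B_{2m−1} = {g ∈ B_{2m} : |g|(2m) = 2m and z_{2m}(g) = 0} and B_{2m−2} = {g ∈ B_{2m} : |g|(j) = j and z_j(g) = 0 for j ∈ {2m−1, 2m}}. Let I⁰_{2m} = {v ∈ I(2,2m) : |v| is fixed-point-free} and I⁰_{2m−2} = {v ∈ I(2,2m) : |v|(j) = j and z_j(v) = 0 for j ∈ {2m−1,2m}, and |v|(j) ≠ j for all j ≤ 2m−2}. Then for every g ∈ B_{2m−1}: 2^{2m−2}·(2m−2)! · Σ_{v ∈ I⁰_{2m}, |g|v|g|⁻¹ = v} (−1)^{⟨g,v⟩} = Σ_{x ∈ B_{2m−1} with x⁻¹gx ∈ B_{2m−2}} Σ_{w ∈ I⁰_{2m−2}, |x⁻¹gx| w |x⁻¹gx|⁻¹ = w} (−1)^{⟨x⁻¹gx, w⟩}. (This identity of class functions says that the character of the restriction to B_{2m−1} of the representation φ of B_{2m} on the span of {C_v : v ∈ I⁰_{2m}} equals the character of the representation of B_{2m−1} induced from the representation φ of B_{2m−2} on the span of {C_w : w ∈ I⁰_{2m−2}}.) -/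

import Mathlib

noncomputable section

/-- The wreath product `G(r,n) = C_r ≀ S_n`, realized as pairs of a color vector
`z : Fin n → ZMod r` and a permutation `p` of `Fin n`. -/
@[ext] structure WreathG (r n : ℕ) where
  z : Fin n → ZMod r
  p : Equiv.Perm (Fin n)

namespace WreathG

variable {r n : ℕ}

instance : One (WreathG r n) := ⟨⟨0, 1⟩⟩
instance : Mul (WreathG r n) := ⟨fun g h => ⟨g.z + h.z ∘ g.p.symm, g.p * h.p⟩⟩
instance : Inv (WreathG r n) := ⟨fun g => ⟨-(g.z ∘ g.p), g.p⁻¹⟩⟩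

@[simp] theorem one_z : (1 : WreathG r n).z = 0 := rfl
@[simp] theorem one_p : (1 : WreathG r n).p = 1 := rfl
@[simp] theorem mul_z (a b : WreathG r n) : (a * b).z = a.z + b.z ∘ a.p.symm := rfl
@[simp] theorem mul_p (a b : WreathG r n) : (a * b).p = a.p * b.p := rfl
@[simp] theorem inv_z (a : WreathG r n) : (a⁻¹).z = -(a.z ∘ a.p) := rfl
@[simp] theorem inv_p (a : WreathG r n) : (a⁻¹).p = a.p⁻¹ := rfl

instance : Group (WreathG r n) :=
  Group.ofLeftAxioms
    (fun a b c => by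
      refine WreathG.ext ?_ (mul_assoc a.p b.p c.p)
      funext x
      show (a.z x + b.z (a.p.symm x)) + c.z ((a.p * b.p).symm x)
          = a.z x + (b.z (a.p.symm x) + c.z (b.p.symm (a.p.symm x)))
      have h : (a.p * b.p).symm x = b.p.symm (a.p.symm x) := rfl
      rw [h, add_assoc])
    (fun a => by
      refine WreathG.ext ?_ (one_mul a.p)
      funext x
      show 0 + a.z ((1 : Equiv.Perm (Fin n)).symm x) = a.z x
      rw [zero_add]; rfl)
    (fun a => by
      refine WreathG.ext ?_ (inv_mul_cancel a.p)
      funext x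
      show -(a.z (a.p x)) + a.z ((a.p⁻¹).symm x) = 0
      have h : (a.p⁻¹).symm x = a.p x := rfl
      rw [h, neg_add_cancel])

/-- An absolute involution of `G(r,n)`: `|v|² = 1` and `z ∘ |v| = z`. -/
def IsAbsInv (v : WreathG r n) : Prop := v.p ^ 2 = 1 ∧ v.z ∘ v.p = v.z

instance (v : WreathG r n) : Decidable (IsAbsInv v) :=
  inferInstanceAs (Decidable (_ ∧ _))

/-- Absolute conjugation `τ·(z,σ)·τ⁻¹ = (z ∘ τ⁻¹, τστ⁻¹)`. -/
def aconj (τ : Equiv.Perm (Fin n)) (v : WreathG r n) : WreathG r n :=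
  ⟨v.z ∘ τ.symm, τ * v.p * τ⁻¹⟩

theorem IsAbsInv.aconj {v : WreathG r n} (h : IsAbsInv v) (τ : Equiv.Perm (Fin n)) :
    IsAbsInv (WreathG.aconj τ v) := by
  obtain ⟨h1, h2⟩ := h
  constructor
  · show (τ * v.p * τ⁻¹) ^ 2 = 1
    have key : (τ * v.p * τ⁻¹) * (τ * v.p * τ⁻¹) = τ * (v.p * v.p) * τ⁻¹ := by
      simp [mul_assoc]
    rw [sq, key, ← sq, h1, mul_one, mul_inv_cancel]
  · funext x
    have := congrFun h2 (τ.symm x)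
    simpa [WreathG.aconj, Function.comp] using this

/-- `⟨g,v⟩ = ∑ i z_i(g)·z_i(v) ∈ ZMod r`. -/
def pairing (g v : WreathG r n) : ZMod r := ∑ i, g.z i * v.z i

/-- `inv_v(g)`: the number of pairs `i < j` with `|v|(i) = j` and `|g|(i) > |g|(j)`. -/
def invv (v g : WreathG r n) : ℕ :=
  Nat.card {q : Fin n × Fin n // q.1 < q.2 ∧ v.p q.1 = q.2 ∧ g.p q.2 < g.p q.1}

/-- The number of inversions of a permutation. -/
def invPerm (σ : Equiv.Perm (Fin n)) : ℕ :=
  Nat.card {q : Fin n × Fin n // q.1 < q.2 ∧ σ q.2 < σ q.1}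

/-- `fix_i(v)`: the number of `j` with `|v|(j) = j` and `z_j(v) = i`. -/
def fixc (v : WreathG r n) (i : ZMod r) : ℕ :=
  Nat.card {j : Fin n // v.p j = j ∧ v.z j = i}

/-- `pair_i(v)`: the number of pairs `j < k` with `|v|(j) = k` and `z_j(v) = z_k(v) = i`. -/
def pairc (v : WreathG r n) (i : ZMod r) : ℕ :=
  Nat.card {q : Fin n × Fin n // q.1 < q.2 ∧ v.p q.1 = q.2 ∧ v.z q.1 = i ∧ v.z q.2 = i}

instance : DecidableEq (WreathG r n) := fun a b =>
  decidable_of_iff (a.z = b.z ∧ a.p = b.p)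
    (by constructor
        · rintro ⟨h1, h2⟩; exact WreathG.ext h1 h2
        · rintro rfl; exact ⟨rfl, rfl⟩)

instance [NeZero r] : Fintype (WreathG r n) :=
  Fintype.ofEquiv ((Fin n → ZMod r) × Equiv.Perm (Fin n))
    { toFun := fun x => ⟨x.1, x.2⟩
      invFun := fun g => (g.z, g.p)
      left_inv := fun _ => rfl
      right_inv := fun _ => rfl }

end WreathG

/-- The set `I(r,n)` of absolute involutions, as a subtype. -/
abbrev AbsInv (r n : ℕ) := {v : WreathG r n // WreathG.IsAbsInv v}

/-- The model space `M`: the complex vector space with basis `{C_v : v ∈ I(r,n)}`. -/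
abbrev ModelSpace (r n : ℕ) := AbsInv r n →₀ ℂ

/-- `ζ_r = exp(2πi/r)`. -/
def zetaC (r : ℕ) : ℂ := Complex.exp (2 * Real.pi * Complex.I / r)

/-- `ζ_r` raised to an exponent in `ZMod r` (well defined since `ζ_r^r = 1`). -/
def zetaPow (r : ℕ) (a : ZMod r) : ℂ := zetaC r ^ a.val

/-- The Gelfand model operator `ϱ(g) C_v = ζ_r^{⟨g,v⟩} (−1)^{inv_v(g)} C_{|g|v|g|⁻¹}`. -/
def modelRho {r n : ℕ} (g : WreathG r n) :
    ModelSpace r n →ₗ[ℂ] ModelSpace r n :=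
  Finsupp.lsum ℂ fun v =>
    ((zetaPow r (WreathG.pairing g v.1) * (-1 : ℂ) ^ WreathG.invv v.1 g) •
      Finsupp.lsingle (⟨WreathG.aconj g.p v.1, v.2.aconj g.p⟩ : AbsInv r n))

/-- The auxiliary operator `φ(g) C_v = ζ_r^{⟨g,v⟩} C_{|g|v|g|⁻¹}`. -/
def modelPhi {r n : ℕ} (g : WreathG r n) :
    ModelSpace r n →ₗ[ℂ] ModelSpace r n :=
  Finsupp.lsum ℂ fun v =>
    ((zetaPow r (WreathG.pairing g v.1)) •
      Finsupp.lsingle (⟨WreathG.aconj g.p v.1, v.2.aconj g.p⟩ : AbsInv r n))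

/-- `(−1)` raised to an exponent in `ZMod 2`. -/
def negOnePow2 (a : ZMod 2) : ℂ := (-1 : ℂ) ^ a.val

/-- The Gelfand model operator for `B_n = G(2,n)`:
`ϱ(g) C_v = (−1)^{⟨g,v⟩} (−1)^{inv_v(g)} C_{|g|v|g|⁻¹}`. -/
def modelRho2 {n : ℕ} (g : WreathG 2 n) : ModelSpace 2 n →ₗ[ℂ] ModelSpace 2 n :=
  Finsupp.lsum ℂ fun v =>
    ((negOnePow2 (WreathG.pairing g v.1) * (-1 : ℂ) ^ WreathG.invv v.1 g) •
      Finsupp.lsingle (⟨WreathG.aconj g.p v.1, v.2.aconj g.p⟩ : AbsInv 2 n))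

/-- The auxiliary operator for `B_n = G(2,n)`: `φ(g) C_v = (−1)^{⟨g,v⟩} C_{|g|v|g|⁻¹}`. -/
def modelPhi2 {n : ℕ} (g : WreathG 2 n) : ModelSpace 2 n →ₗ[ℂ] ModelSpace 2 n :=
  Finsupp.lsum ℂ fun v =>
    ((negOnePow2 (WreathG.pairing g v.1)) •
      Finsupp.lsingle (⟨WreathG.aconj g.p v.1, v.2.aconj g.p⟩ : AbsInv 2 n))

/-! Write `a`, `b` for the last two coordinates. Flipping the colours of `v` on the 2-cycle of
`|v|` through `b` is an involution of the fixed-point-free absolute involutions commuting with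
`|g|`, and it adds `z_{|v|(b)}(g)` to `⟨g, v⟩` because `z_b(g) = 0`. Hence the `v` with
`z_{|v|(b)}(g) ≠ 0` cancel, while the others give twice the sum over those with `z_b(v) = 0`.
On the other side, joining the fixed points `a`, `b` of `w` into a 2-cycle and then conjugating
absolutely by `|x|` is a pairing-preserving bijection onto the `v` with `z_b(v) = 0` and
`|v|(b) = |x|(a)`; and exactly `2^{n-1} (n-2)!` elements `x ∈ B_{n-1}` have a prescribed
`|x|(a) ≠ b`. -/

open Finset Equiv
open scoped Nat

namespace WreathG

variable {r n : ℕ}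

/-- `v` lies in the copy of `G(r, n-1)` fixing the coordinate `j` with colour `0`. -/
def Stabilizes (j : Fin n) (v : WreathG r n) : Prop := v.p j = j ∧ v.z j = 0

instance (j : Fin n) (v : WreathG r n) : Decidable (Stabilizes j v) :=
  inferInstanceAs (Decidable (_ ∧ _))

section AbsoluteConjugation

@[simp] theorem aconj_z (τ : Perm (Fin n)) (v : WreathG r n) : (aconj τ v).z = v.z ∘ τ.symm := rfl

@[simp] theorem aconj_p (τ : Perm (Fin n)) (v : WreathG r n) :
    (aconj τ v).p = τ * v.p * τ⁻¹ := rfl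

theorem aconj_aconj (σ τ : Perm (Fin n)) (v : WreathG r n) :
    aconj σ (aconj τ v) = aconj (σ * τ) v :=
  WreathG.ext rfl (by simp [mul_assoc])

theorem aconj_inv_aconj (τ : Perm (Fin n)) (v : WreathG r n) : aconj τ⁻¹ (aconj τ v) = v :=
  WreathG.ext (by ext; simp [Perm.inv_def]) (by simp [mul_assoc])

theorem aconj_aconj_inv (τ : Perm (Fin n)) (v : WreathG r n) : aconj τ (aconj τ⁻¹ v) = v := by
  simpa using aconj_inv_aconj τ⁻¹ v

theorem aconj_injective (τ : Perm (Fin n)) : Function.Injective (aconj τ : WreathG r n → _) :=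
  Function.LeftInverse.injective (aconj_inv_aconj τ)

theorem aconj_aconj_eq_self_iff (σ τ : Perm (Fin n)) (v : WreathG r n) :
    aconj σ (aconj τ v) = aconj τ v ↔ aconj (τ⁻¹ * σ * τ) v = v := by
  have h : aconj σ (aconj τ v) = aconj τ (aconj (τ⁻¹ * σ * τ) v) := by
    rw [aconj_aconj, aconj_aconj]; group
  rw [h, (aconj_injective τ).eq_iff]

theorem apply_p_of_aconj_eq_self {σ : Perm (Fin n)} {v : WreathG r n} (h : aconj σ v = v)
    (i : Fin n) : σ (v.p i) = v.p (σ i) := by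
  conv_rhs => rw [← h]
  simp

theorem conj_p (x g : WreathG r n) : (x⁻¹ * g * x).p = x.p⁻¹ * g.p * x.p := rfl

theorem conj_z_apply (x g : WreathG r n) (i : Fin n) :
    (x⁻¹ * g * x).z i = -x.z (x.p i) + g.z (x.p i) + x.z (g.p.symm (x.p i)) := rfl

theorem pairing_conj (g x u : WreathG r n) (hu : aconj (x⁻¹ * g * x).p u = u) :
    pairing (x⁻¹ * g * x) u = pairing g (aconj x.p u) := by
  set v := aconj x.p u
  have hv : v.z ∘ g.p.symm = v.z :=
    congrArg z ((aconj_aconj_eq_self_iff g.p x.p u).2 hu)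
  have hx : ∑ j, x.z (g.p.symm j) * v.z j = ∑ j, x.z j * v.z j := by
    conv_lhs => rw [← hv]
    exact Equiv.sum_comp g.p.symm fun j => x.z j * v.z j
  unfold pairing
  rw [← Equiv.sum_comp x.p.symm]
  simp only [conj_z_apply, apply_symm_apply]
  change ∑ j, (-x.z j + g.z j + x.z (g.p.symm j)) * v.z j = _
  simp only [add_mul, neg_mul, sum_add_distrib, sum_neg_distrib, hx]
  abel

theorem stabilizes_conj_iff {j : Fin n} {x g : WreathG r n} :
    Stabilizes j (x⁻¹ * g * x) ↔ Stabilizes (x.p j) g := by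
  unfold Stabilizes
  rw [conj_p, conj_z_apply, Perm.mul_apply, Perm.mul_apply, Perm.inv_eq_iff_eq, eq_comm]
  refine and_congr_right fun hp => ?_
  rw [g.p.symm_apply_eq.2 hp, add_comm, ← add_assoc, add_neg_cancel, zero_add]

end AbsoluteConjugation

theorem IsAbsInv.p_p {v : WreathG r n} (h : IsAbsInv v) (i : Fin n) : v.p (v.p i) = i := by
  rw [← Perm.mul_apply, ← sq, h.1, Perm.one_apply]

theorem IsAbsInv.z_p {v : WreathG r n} (h : IsAbsInv v) (i : Fin n) : v.z (v.p i) = v.z i :=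
  congrFun h.2 i

theorem commute_swap_of_preserves_pair {π : Perm (Fin n)} {a b : Fin n}
    (h : π a = a ∧ π b = b ∨ π a = b ∧ π b = a) : Commute π (swap a b) := by
  unfold Commute SemiconjBy
  rw [mul_swap_eq_swap_mul]
  rcases h with ⟨ha, hb⟩ | ⟨ha, hb⟩ <;> simp [ha, hb, swap_comm]

theorem apply_mem_pair_iff {π : Perm (Fin n)} {a b : Fin n}
    (h : π a = a ∧ π b = b ∨ π a = b ∧ π b = a) (i : Fin n) :
    π i ∈ ({a, b} : Finset (Fin n)) ↔ i ∈ ({a, b} : Finset (Fin n)) := by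
  have hi : i ∈ ({a, b} : Finset (Fin n)) ↔ π i = π a ∨ π i = π b := by
    simp [π.injective.eq_iff]
  rw [hi]
  rcases h with ⟨ha, hb⟩ | ⟨ha, hb⟩ <;> simp [ha, hb, or_comm]

section MulSwap

def mulSwap (a b : Fin n) (w : WreathG r n) : WreathG r n := ⟨w.z, w.p * swap a b⟩

theorem mulSwap_p_apply (a b : Fin n) (w : WreathG r n) (j : Fin n) :
    (mulSwap a b w).p j = w.p (swap a b j) := rfl

theorem mulSwap_mulSwap (a b : Fin n) (w : WreathG r n) : mulSwap a b (mulSwap a b w) = w :=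
  WreathG.ext rfl (by simp [mulSwap, mul_assoc])

theorem IsAbsInv.mulSwap {a b : Fin n} {w : WreathG r n} (hw : IsAbsInv w)
    (hc : Commute w.p (swap a b)) (hz : w.z a = w.z b) : IsAbsInv (mulSwap a b w) := by
  refine ⟨by rw [WreathG.mulSwap, hc.mul_pow, hw.1, sq, swap_mul_self, one_mul], ?_⟩
  change w.z ∘ w.p ∘ swap a b = w.z
  rw [← Function.comp_assoc, hw.2, comp_swap_eq_update, hz, Function.update_eq_self,
    ← hz, Function.update_eq_self]

theorem aconj_mulSwap {a b : Fin n} {σ : Perm (Fin n)} (ha : σ a = a) (hb : σ b = b)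
    (w : WreathG r n) : aconj σ (mulSwap a b w) = mulSwap a b (aconj σ w) := by
  refine WreathG.ext rfl ?_
  have hs : σ * swap a b * σ⁻¹ = swap a b := by rw [← swap_apply_apply, ha, hb]
  change σ * (w.p * swap a b) * σ⁻¹ = σ * w.p * σ⁻¹ * swap a b
  conv_rhs => rw [← hs]
  group

end MulSwap

section FlipPair

def pairIndicator (a b : Fin n) (i : Fin n) : ZMod 2 :=
  if i ∈ ({a, b} : Finset (Fin n)) then 1 else 0

theorem pairIndicator_comp {π : Perm (Fin n)} {a b : Fin n}
    (h : π a = a ∧ π b = b ∨ π a = b ∧ π b = a) : pairIndicator a b ∘ π = pairIndicator a b := by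
  ext i
  simp only [Function.comp_apply, pairIndicator, apply_mem_pair_iff h]

theorem sum_mul_pairIndicator {a b : Fin n} (hab : a ≠ b) (f : Fin n → ZMod 2) :
    ∑ i, f i * pairIndicator a b i = f a + f b := by
  simp only [pairIndicator, mul_ite, mul_one, mul_zero, sum_ite_mem, univ_inter, sum_pair hab]

def flipPair (b : Fin n) (v : WreathG 2 n) : WreathG 2 n :=
  ⟨v.z + pairIndicator b (v.p b), v.p⟩

theorem flipPair_flipPair (b : Fin n) (v : WreathG 2 n) : flipPair b (flipPair b v) = v :=
  WreathG.ext (by ext i; simp only [flipPair, Pi.add_apply, add_assoc,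
    CharTwo.add_self_eq_zero, add_zero]) rfl

theorem flipPair_z_self (b : Fin n) (v : WreathG 2 n) : (flipPair b v).z b = v.z b + 1 := by
  simp [flipPair, pairIndicator]

theorem IsAbsInv.flipPair {v : WreathG 2 n} (hv : IsAbsInv v) (b : Fin n) :
    IsAbsInv (flipPair b v) := by
  refine ⟨hv.1, ?_⟩
  change (v.z + pairIndicator b (v.p b)) ∘ v.p = _
  rw [Pi.add_comp, hv.2, pairIndicator_comp (Or.inr ⟨rfl, hv.p_p b⟩)]
  rfl

theorem aconj_flipPair {σ : Perm (Fin n)} {b : Fin n} {v : WreathG 2 n} (hb : σ b = b)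
    (hv : aconj σ v = v) : aconj σ (flipPair b v) = flipPair b v := by
  have hk : σ.symm (v.p b) = v.p b := by
    rw [symm_apply_eq, apply_p_of_aconj_eq_self hv, hb]
  have hvz : v.z ∘ σ.symm = v.z := congrArg WreathG.z hv
  refine WreathG.ext ?_ (congrArg WreathG.p hv : σ * v.p * σ⁻¹ = v.p)
  change (v.z + pairIndicator b (v.p b)) ∘ σ.symm = _
  rw [Pi.add_comp, hvz,
    pairIndicator_comp (Or.inl ⟨σ.symm_apply_eq.2 hb.symm, hk⟩)]
  rfl

theorem pairing_flipPair (g : WreathG 2 n) {b : Fin n} {v : WreathG 2 n} (hv : v.p b ≠ b) :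
    pairing g (flipPair b v) = pairing g v + (g.z b + g.z (v.p b)) := by
  simp only [pairing, flipPair, Pi.add_apply, mul_add, sum_add_distrib,
    sum_mul_pairIndicator hv.symm]

end FlipPair

theorem negOnePow2_add_negOnePow2_add (s t : ZMod 2) :
    negOnePow2 s + negOnePow2 (s + t) = if t = 0 then 2 * negOnePow2 s else 0 := by
  obtain rfl | rfl : s = 0 ∨ s = 1 := by revert s; decide
  all_goals obtain rfl | rfl : t = 0 ∨ t = 1 := by revert t; decide
  all_goals norm_num [negOnePow2, show (1 : ZMod 2).val = 1 from rfl,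
    show (2 : ZMod 2).val = 0 from rfl]

variable [NeZero r]

def fpfInvFixedBy (σ : Perm (Fin n)) : Finset (WreathG r n) :=
  univ.filter fun v => IsAbsInv v ∧ (∀ j, v.p j ≠ j) ∧ aconj σ v = v

theorem flipPair_mem_fpfInvFixedBy {b : Fin n} {g : WreathG 2 n} (hg : g.p b = b) {v : WreathG 2 n}
    (hv : v ∈ fpfInvFixedBy g.p) : flipPair b v ∈ fpfInvFixedBy g.p := by
  simp only [fpfInvFixedBy, mem_filter, mem_univ, true_and] at hv ⊢
  exact ⟨hv.1.flipPair b, hv.2.1, aconj_flipPair hg hv.2.2⟩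

theorem sum_fpfInvFixedBy_eq_two_mul {b : Fin n} {g : WreathG 2 n} (hg : Stabilizes b g) :
    ∑ v ∈ fpfInvFixedBy g.p, negOnePow2 (pairing g v) =
      2 * ∑ v ∈ (fpfInvFixedBy g.p).filter (fun v => v.z b = 0 ∧ g.z (v.p b) = 0),
        negOnePow2 (pairing g v) := by
  set A := fpfInvFixedBy (r := 2) g.p
  have hfpf : ∀ v ∈ A, v.p b ≠ b := fun v hv => (mem_filter.1 hv).2.2.1 b
  have hflip : ∑ v ∈ A.filter (fun v => ¬ v.z b = 0), negOnePow2 (pairing g v) =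
      ∑ v ∈ A.filter (fun v => v.z b = 0), negOnePow2 (pairing g (flipPair b v)) := by
    refine sum_nbij' (flipPair b) (flipPair b) ?_ ?_ (fun v _ => flipPair_flipPair b v)
      (fun v _ => flipPair_flipPair b v) ?_
    · intro v hv
      obtain ⟨hvA, hvb⟩ := mem_filter.1 hv
      refine mem_filter.2 ⟨flipPair_mem_fpfInvFixedBy hg.1 hvA, ?_⟩
      rw [flipPair_z_self]
      exact (by decide : ∀ s : ZMod 2, s ≠ 0 → s + 1 = 0) _ hvb
    · intro v hv
      obtain ⟨hvA, hvb⟩ := mem_filter.1 hv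
      refine mem_filter.2 ⟨flipPair_mem_fpfInvFixedBy hg.1 hvA, ?_⟩
      rw [flipPair_z_self, hvb, zero_add]
      exact one_ne_zero
    · intro v _; rw [flipPair_flipPair]
  have hpair : ∀ v ∈ A.filter (fun v => v.z b = 0),
      negOnePow2 (pairing g v) + negOnePow2 (pairing g (flipPair b v)) =
        if g.z (v.p b) = 0 then 2 * negOnePow2 (pairing g v) else 0 := by
    intro v hv
    rw [pairing_flipPair g (hfpf v (mem_filter.1 hv).1), hg.2, zero_add,
      negOnePow2_add_negOnePow2_add]
  rw [← sum_filter_add_sum_filter_not A (fun v => v.z b = 0), hflip, ← sum_add_distrib,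
    sum_congr rfl hpair, ← sum_filter, filter_filter, mul_sum]

theorem sum_mulSwap {M : Type*} [AddCommMonoid M] {a b : Fin n} (hab : a ≠ b)
    {σ : Perm (Fin n)} (ha : σ a = a) (hb : σ b = b) (f : (Fin n → ZMod r) → M) :
    ∑ w ∈ univ.filter (fun w : WreathG r n => IsAbsInv w ∧ Stabilizes a w ∧ Stabilizes b w ∧
        (∀ j, j ≠ a → j ≠ b → w.p j ≠ j) ∧ aconj σ w = w), f w.z =
      ∑ u ∈ (fpfInvFixedBy σ).filter (fun u => u.z b = 0 ∧ u.p b = a), f u.z := by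
  refine sum_nbij' (mulSwap a b) (mulSwap a b) ?_ ?_ (fun w _ => mulSwap_mulSwap a b w)
    (fun u _ => mulSwap_mulSwap a b u) (fun _ _ => rfl)
  · intro w hw
    simp only [fpfInvFixedBy, mem_filter, mem_univ, true_and] at hw ⊢
    obtain ⟨hw, ⟨hpa, hza⟩, ⟨hpb, hzb⟩, hfree, hfix⟩ := hw
    refine ⟨⟨hw.mulSwap (commute_swap_of_preserves_pair (Or.inl ⟨hpa, hpb⟩)) (hza.trans hzb.symm),
      fun j => ?_, by rw [aconj_mulSwap ha hb, hfix]⟩, hzb, by simp [mulSwap_p_apply, hpa]⟩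
    rw [mulSwap_p_apply]
    by_cases hja : j = a
    · simp [hja, hpb, hab.symm]
    by_cases hjb : j = b
    · simp [hjb, hpa, hab]
    rw [swap_apply_of_ne_of_ne hja hjb]
    exact hfree j hja hjb
  · intro u hu
    simp only [fpfInvFixedBy, mem_filter, mem_univ, true_and] at hu ⊢
    obtain ⟨⟨hu, hfree, hfix⟩, hzb, hpb⟩ := hu
    have hpa : u.p a = b := by rw [← hpb, hu.p_p]
    have hza : u.z a = 0 := by rw [← hpb, hu.z_p, hzb]
    refine ⟨hu.mulSwap (commute_swap_of_preserves_pair (Or.inr ⟨hpa, hpb⟩)) (hza.trans hzb.symm),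
      ⟨by simp [mulSwap_p_apply, hpb], hza⟩, ⟨by simp [mulSwap_p_apply, hpa], hzb⟩,
      fun j hja hjb => ?_, by rw [aconj_mulSwap ha hb, hfix]⟩
    rw [mulSwap_p_apply, swap_apply_of_ne_of_ne hja hjb]
    exact hfree j

theorem aconj_mem_fpfInvFixedBy {σ : Perm (Fin n)} {v : WreathG r n} (hv : v ∈ fpfInvFixedBy σ)
    (τ : Perm (Fin n)) : aconj τ v ∈ fpfInvFixedBy (τ * σ * τ⁻¹) := by
  simp only [fpfInvFixedBy, mem_filter, mem_univ, true_and] at hv ⊢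
  obtain ⟨hv, hfree, hfix⟩ := hv
  refine ⟨hv.aconj τ, fun j h => hfree (τ⁻¹ j) (τ.eq_symm_apply.2 h), ?_⟩
  rw [aconj_aconj_eq_self_iff]
  convert hfix using 2
  group

theorem sum_aconj {M : Type*} [AddCommMonoid M] {a b : Fin n} {g x : WreathG r n}
    (hxb : x.p b = b) (f : ZMod r → M) :
    ∑ u ∈ (fpfInvFixedBy (x⁻¹ * g * x).p).filter (fun u => u.z b = 0 ∧ u.p b = a),
        f (pairing (x⁻¹ * g * x) u) =
      ∑ v ∈ (fpfInvFixedBy g.p).filter (fun v => v.z b = 0 ∧ v.p b = x.p a), f (pairing g v) := by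
  have hxb' : x.p⁻¹ b = b := by rw [Perm.inv_eq_iff_eq, hxb]
  refine sum_nbij' (aconj x.p) (aconj x.p⁻¹) ?_ ?_ (fun u _ => aconj_inv_aconj x.p u)
    (fun v _ => aconj_aconj_inv x.p v) ?_
  · intro u hu
    obtain ⟨hu, hzb, hpb⟩ := mem_filter.1 hu
    refine mem_filter.2 ⟨?_, ?_, ?_⟩
    · convert aconj_mem_fpfInvFixedBy hu x.p using 2
      rw [conj_p]; group
    · change u.z (x.p⁻¹ b) = 0
      rw [hxb', hzb]
    · change x.p (u.p (x.p⁻¹ b)) = x.p a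
      rw [hxb', hpb]
  · intro v hv
    obtain ⟨hv, hzb, hpb⟩ := mem_filter.1 hv
    refine mem_filter.2 ⟨?_, ?_, ?_⟩
    · convert aconj_mem_fpfInvFixedBy hv x.p⁻¹ using 2
      rw [conj_p, inv_inv]
    · change v.z (x.p b) = 0
      rw [hxb, hzb]
    · change x.p⁻¹ (v.p (x.p b)) = a
      rw [hxb, hpb, Perm.inv_eq_iff_eq]
  · intro u hu
    rw [pairing_conj g x u (mem_filter.1 (mem_filter.1 hu).1).2.2.2]

theorem card_perm_fix_map {a b k : Fin n} (hab : a ≠ b) (hkb : k ≠ b) :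
    Fintype.card {p : Perm (Fin n) // p b = b ∧ p a = k} = (n - 2)! := by
  have hmul : {p : Perm (Fin n) // p b = b ∧ p a = k} ≃ {p : Perm (Fin n) // p b = b ∧ p a = a} :=
    (Equiv.mulLeft (swap a k)).subtypeEquiv fun p => by
      simp [swap_apply_of_ne_of_ne hab.symm hkb.symm, swap_apply_eq_iff]
  have hfix : {p : Perm (Fin n) // p b = b ∧ p a = a} ≃
      {p : Perm (Fin n) // ∀ j, ¬(j ≠ a ∧ j ≠ b) → p j = j} :=
    Equiv.subtypeEquivRight fun p => by
      constructor
      · rintro ⟨hb, ha⟩ j hj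
        obtain rfl | rfl := not_and_or.1 hj |>.imp not_not.1 not_not.1 <;> assumption
      · intro h
        exact ⟨h b (by simp), h a (by simp)⟩
  rw [Fintype.card_congr (hmul.trans (hfix.trans (Perm.subtypeEquivSubtypePerm _).symm)),
    Fintype.card_perm, Fintype.card_subtype]
  have : univ.filter (fun j : Fin n => j ≠ a ∧ j ≠ b) = univ \ {a, b} := by ext; simp
  rw [this, card_sdiff_of_subset (subset_univ _), card_pair hab, card_univ, Fintype.card_fin]

theorem card_fun_apply_eq_zero (b : Fin n) :
    Fintype.card {z : Fin n → ZMod r // z b = 0} = r ^ (n - 1) := by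
  rw [Fintype.card_subtype, ← Fintype.piFinset_univ]
  simpa using Fintype.card_filter_piFinset_const_eq_of_mem (univ : Finset (ZMod r)) b (mem_univ 0)

theorem card_filter_stabilizes_p_eq {a b k : Fin n} (hab : a ≠ b) (hkb : k ≠ b) :
    #(univ.filter fun x : WreathG r n => Stabilizes b x ∧ x.p a = k) = r ^ (n - 1) * (n - 2)! := by
  let e : {x : WreathG r n // Stabilizes b x ∧ x.p a = k} ≃
      {z : Fin n → ZMod r // z b = 0} × {p : Perm (Fin n) // p b = b ∧ p a = k} :=
    { toFun := fun x => (⟨x.1.z, x.2.1.2⟩, ⟨x.1.p, x.2.1.1, x.2.2⟩)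
      invFun := fun y => ⟨⟨y.1.1, y.2.1⟩, ⟨y.2.2.1, y.1.2⟩, y.2.2.2⟩
      left_inv := fun _ => rfl
      right_inv := fun _ => rfl }
  rw [← Fintype.card_subtype, Fintype.card_congr e, Fintype.card_prod, card_fun_apply_eq_zero,
    card_perm_fix_map hab hkb]

theorem sum_absInv_filter {M : Type*} [AddCommMonoid M] (P : WreathG r n → Prop) [DecidablePred P]
    [DecidablePred fun v : AbsInv r n => P v.1] (f : WreathG r n → M) :
    ∑ v ∈ univ.filter (fun v : AbsInv r n => P v.1), f v.1 =
      ∑ v ∈ univ.filter (fun v => IsAbsInv v ∧ P v), f v := by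
  refine sum_bij' (fun v _ => v.1) (fun v hv => ⟨v, (mem_filter.1 hv).2.1⟩) ?_ ?_ ?_ ?_ ?_ <;>
    simp_all

theorem sum_conj_eq_sum_filter {M : Type*} [AddCommMonoid M] {a b : Fin n} (hab : a ≠ b)
    {g x : WreathG r n} (hgb : g.p b = b) (hxb : x.p b = b) (hxa : Stabilizes (x.p a) g)
    (f : ZMod r → M) :
    ∑ w ∈ univ.filter (fun w => IsAbsInv w ∧ Stabilizes a w ∧ Stabilizes b w ∧
        (∀ j, j ≠ a → j ≠ b → w.p j ≠ j) ∧ aconj (x⁻¹ * g * x).p w = w),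
        f (pairing (x⁻¹ * g * x) w) =
      ∑ v ∈ ((fpfInvFixedBy g.p).filter fun v => v.z b = 0 ∧ g.z (v.p b) = 0).filter
        (fun v => v.p b = x.p a), f (pairing g v) := by
  have ha : (x⁻¹ * g * x).p a = a := (stabilizes_conj_iff.2 hxa).1
  have hb : (x⁻¹ * g * x).p b = b := by
    rw [conj_p, Perm.mul_apply, Perm.mul_apply, hxb, hgb, Perm.inv_eq_iff_eq, hxb]
  refine (sum_mulSwap hab ha hb fun z => f (∑ i, (x⁻¹ * g * x).z i * z i)).trans
    ((sum_aconj hxb f).trans ?_)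
  rw [filter_filter]
  refine sum_congr (filter_congr fun v _ => ?_) fun _ _ => rfl
  constructor
  · rintro ⟨hzb, hpb⟩
    exact ⟨⟨hzb, hpb ▸ hxa.2⟩, hpb⟩
  · rintro ⟨⟨hzb, -⟩, hpb⟩
    exact ⟨hzb, hpb⟩

theorem card_smul_sum_eq_sum_stabilizes {M : Type*} [AddCommMonoid M] {a b : Fin n} (hab : a ≠ b)
    {g : WreathG r n} (hgb : g.p b = b) (f : WreathG r n → M) :
    (r ^ (n - 1) * (n - 2)!) •
        ∑ v ∈ (fpfInvFixedBy g.p).filter (fun v => v.z b = 0 ∧ g.z (v.p b) = 0), f v =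
      ∑ x ∈ univ.filter (fun x : WreathG r n => Stabilizes b x ∧ Stabilizes (x.p a) g),
        ∑ v ∈ ((fpfInvFixedBy g.p).filter fun v => v.z b = 0 ∧ g.z (v.p b) = 0).filter
          (fun v => v.p b = x.p a), f v := by
  set S := (fpfInvFixedBy (r := r) g.p).filter fun v => v.z b = 0 ∧ g.z (v.p b) = 0
  rw [← filter_filter (p := Stabilizes b) (q := fun x => Stabilizes (x.p a) g),
    sum_filter_of_ne (p := fun x : WreathG r n => Stabilizes (x.p a) g)]
  · rw [sum_comm' (t' := S)
      (s' := fun v => univ.filter fun x : WreathG r n => Stabilizes b x ∧ x.p a = v.p b), smul_sum]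
    · refine sum_congr rfl fun v hv => ?_
      have hfpf : v.p b ≠ b := (mem_filter.1 (mem_filter.1 hv).1).2.2.1 b
      rw [sum_const, card_filter_stabilizes_p_eq hab hfpf]
    · intro x v
      simp only [mem_filter, mem_univ, true_and, eq_comm (a := v.p b)]
      tauto
  · intro x _ hne
    obtain ⟨v, hv, -⟩ := exists_ne_zero_of_sum_ne_zero hne
    obtain ⟨⟨hvA, -, hgz⟩, hpb⟩ := mem_filter.1 hv |>.imp_left mem_filter.1
    refine ⟨?_, hpb ▸ hgz⟩
    rw [← hpb, apply_p_of_aconj_eq_self (mem_filter.1 hvA).2.2.2, hgb]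


theorem restriction_char_eq_induced_char_B_pair {a b : Fin n} (hab : a ≠ b) {g : WreathG 2 n}
    (hg : Stabilizes b g) :
    ((2 : ℂ) ^ (n - 2) * (n - 2)!) * ∑ v ∈ fpfInvFixedBy g.p, negOnePow2 (pairing g v) =
      ∑ x ∈ univ.filter (fun x : WreathG 2 n =>
          Stabilizes b x ∧ Stabilizes a (x⁻¹ * g * x) ∧ Stabilizes b (x⁻¹ * g * x)),
        ∑ w ∈ univ.filter (fun w => IsAbsInv w ∧ Stabilizes a w ∧ Stabilizes b w ∧
            (∀ j, j ≠ a → j ≠ b → w.p j ≠ j) ∧ aconj (x⁻¹ * g * x).p w = w),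
          negOnePow2 (pairing (x⁻¹ * g * x) w) := by
  have hn : 2 ≤ n := by
    have := Fin.val_ne_of_ne hab
    omega
  have hconst : (2 : ℂ) ^ (n - 2) * (n - 2)! * 2 = (2 ^ (n - 1) * (n - 2)! : ℕ) := by
    push_cast
    rw [show n - 1 = n - 2 + 1 by omega, pow_succ]
    ring
  rw [sum_fpfInvFixedBy_eq_two_mul hg, ← mul_assoc, hconst, ← nsmul_eq_mul,
    card_smul_sum_eq_sum_stabilizes hab hg.1]
  refine sum_congr (filter_congr fun x _ => ?_) fun x hx => ?_
  · rw [stabilizes_conj_iff, stabilizes_conj_iff]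
    constructor
    · rintro ⟨hxb, hxa⟩
      exact ⟨hxb, hxa, hxb.1.symm ▸ hg⟩
    · rintro ⟨hxb, hxa, -⟩
      exact ⟨hxb, hxa⟩
  · obtain ⟨hxb, hxa, -⟩ := (mem_filter.1 hx).2
    exact (sum_conj_eq_sum_filter hab hg.1 hxb.1 (stabilizes_conj_iff.1 hxa) _).symm

end WreathG

open WreathG

/-- For `g ∈ B_{2m−1}`, the character at `g` of the restriction to
`B_{2m−1}` of the representation `φ` of `B_{2m}` on the span of the `C_v` with `v` a
fixed-point-free involution equals the character at `g` of the representation of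
`B_{2m−1}` induced from the representation `φ` of `B_{2m−2}` on the span of the `C_w` with
`w` a fixed-point-free involution of `B_{2m−2}`. -/
theorem restriction_char_eq_induced_char_B (m : ℕ) (hm : 1 ≤ m)
    (g : WreathG 2 (2 * m))
    (hgp : g.p ⟨2 * m - 1, by omega⟩ = ⟨2 * m - 1, by omega⟩)
    (hgz : g.z ⟨2 * m - 1, by omega⟩ = 0) :
    ((2 : ℂ) ^ (2 * m - 2) * (Nat.factorial (2 * m - 2) : ℂ)) *
      ∑ v ∈ Finset.univ.filter (fun v : AbsInv 2 (2 * m) =>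
          (∀ j, v.1.p j ≠ j) ∧ WreathG.aconj g.p v.1 = v.1),
        negOnePow2 (WreathG.pairing g v.1)
    = ∑ x ∈ Finset.univ.filter (fun x : WreathG 2 (2 * m) =>
          (x.p ⟨2 * m - 1, by omega⟩ = ⟨2 * m - 1, by omega⟩ ∧
            x.z ⟨2 * m - 1, by omega⟩ = 0) ∧
          (∀ j : Fin (2 * m), 2 * m - 2 ≤ j.val →
            ((x⁻¹ * g * x).p j = j ∧ (x⁻¹ * g * x).z j = 0))),
        ∑ w ∈ Finset.univ.filter (fun w : AbsInv 2 (2 * m) =>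
            (∀ j : Fin (2 * m), 2 * m - 2 ≤ j.val → (w.1.p j = j ∧ w.1.z j = 0)) ∧
            (∀ j : Fin (2 * m), j.val < 2 * m - 2 → w.1.p j ≠ j) ∧
            WreathG.aconj (x⁻¹ * g * x).p w.1 = w.1),
          negOnePow2 (WreathG.pairing (x⁻¹ * g * x) w.1) := by
  set a : Fin (2 * m) := ⟨2 * m - 2, by omega⟩
  set b : Fin (2 * m) := ⟨2 * m - 1, by omega⟩
  have hab : a ≠ b := by simp [a, b, Fin.ext_iff]; omega
  have htail : ∀ j : Fin (2 * m), 2 * m - 2 ≤ j.val ↔ j = a ∨ j = b := by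
    intro j; simp only [a, b, Fin.ext_iff]; omega
  have hhead : ∀ j : Fin (2 * m), j.val < 2 * m - 2 ↔ j ≠ a ∧ j ≠ b := fun j => by
    rw [← not_le, htail, not_or]
  rw [sum_absInv_filter (fun v => (∀ j, v.p j ≠ j) ∧ aconj g.p v = v)
    (fun v => negOnePow2 (pairing g v))]
  change _ * ∑ v ∈ fpfInvFixedBy g.p, _ = _
  rw [restriction_char_eq_induced_char_B_pair hab ⟨hgp, hgz⟩]
  refine sum_congr (filter_congr fun x _ => ?_) fun x _ => ?_
  · simp only [htail, forall_eq_or_imp, forall_eq, Stabilizes]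
  rw [sum_absInv_filter (fun w => (∀ j : Fin (2 * m), 2 * m - 2 ≤ j.val → w.p j = j ∧ w.z j = 0) ∧
      (∀ j : Fin (2 * m), j.val < 2 * m - 2 → w.p j ≠ j) ∧ aconj (x⁻¹ * g * x).p w = w)
      (fun w => negOnePow2 (pairing (x⁻¹ * g * x) w))]
  refine sum_congr (filter_congr fun w _ => ?_) fun _ _ => rfl
  simp only [htail, hhead, forall_eq_or_imp, forall_eq, and_imp, Stabilizes, and_assoc]
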